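/- arXiv:2411.04702 — 7 statements merged into one kernel-verified Lean document; each statement's English description precedes it below -/
import Mathlib

section
/- Let x be a complex-valued random variable on a probability space such that E[|x|^{2m}] = m!·P^m for every natural number m (where P > 0), and let y = Σ_{k=0}^{L-1} a_{2k+1}·x·|x|^{2k} for complex coefficients a_1, a_3, …, a_{2L-1}, with the convention a_{2j+1} = 0 for j ≥ L. Then E[|y|^2] = Σ_{k=1}^{2L-1} ( k!·P^k · Σ_{i=1}^{k} a_{2i-1}·conj(a_{2k-2i+1}) ). Consequently the distortion power C_η := E[|y|^2] − |g|^2·P, with g = Σ_{k=0}^{L-1} a_{2k+1}·(k+1)!·P^k, equals Σ_{k=1}^{2L-1} ( k!·P^k · Σ_{i=1}^{k} a_{2i-1}·conj(a_{2k-2i+1}) ) − |g|^2·P. -/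
/-!
Writing `‖y‖² = y * conj y` expands `E‖y‖²` into the double sum of
`a (2j+1) * conj (a (2m+1)) * E‖x‖^(2(j+m+1))`; grouping the terms by the total degree
`k = j + m + 1` gives the convolution in the statement. The moment hypothesis also supplies the
integrability needed to exchange sum and integral, because a non-integrable function has
integral `0 ≠ m! P^m`.
-/

open MeasureTheory Finset ComplexConjugate

theorem sum_Icc_one_eq_sum_range {M : Type*} [AddCommMonoid M] (n : ℕ) (f : ℕ → M) :
    ∑ i ∈ Icc 1 n, f i = ∑ j ∈ range n, f (j + 1) := by
  rw [← Ico_add_one_right_eq_Icc, sum_Ico_eq_sum_range, Nat.add_sub_cancel]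
  simp only [add_comm]

theorem sum_range_sum_range_eq_sum_range_sum_diag {M : Type*} [AddCommMonoid M] (L : ℕ)
    (f : ℕ → ℕ → M) (hf : ∀ j m, L ≤ j ∨ L ≤ m → f j m = 0) :
    ∑ j ∈ range L, ∑ m ∈ range L, f j m
      = ∑ t ∈ range (2 * L - 1), ∑ j ∈ range (t + 1), f j (t - j) := by
  rw [sum_range_diag_flip]
  have hsub : range L ⊆ range (2 * L - 1) := range_subset_range.2 (by omega)
  rw [← sum_subset hsub fun j _ hj => sum_eq_zero fun m _ => hf j m (.inl (by simpa using hj))]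
  refine sum_congr rfl fun j hj =>
    sum_subset (range_subset_range.2 ?_) fun m _ hm => hf j m (.inr ?_)
  · rw [mem_range] at hj; omega
  · rw [mem_range] at hm; omega

theorem sum_Icc_mul_sum_Icc_odd_eq_sum_range_sum_range {R : Type*} [CommSemiring R] (L : ℕ)
    (u v w : ℕ → R)
    (hu : ∀ j, L ≤ j → u (2 * j + 1) = 0) (hv : ∀ j, L ≤ j → v (2 * j + 1) = 0) :
    ∑ k ∈ Icc 1 (2 * L - 1), w k * ∑ i ∈ Icc 1 k, u (2 * i - 1) * v (2 * k - 2 * i + 1)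
      = ∑ j ∈ range L, ∑ m ∈ range L, u (2 * j + 1) * v (2 * m + 1) * w (j + m + 1) := by
  rw [sum_range_sum_range_eq_sum_range_sum_diag L _ fun j m h => by
    rcases h with h | h <;> simp [hu, hv, h]]
  rw [sum_Icc_one_eq_sum_range]
  refine sum_congr rfl fun t _ => ?_
  rw [sum_Icc_one_eq_sum_range, mul_sum]
  refine sum_congr rfl fun j hj => ?_
  have hj : j ≤ t := Nat.lt_succ_iff.1 (mem_range.1 hj)
  rw [show 2 * (j + 1) - 1 = 2 * j + 1 by omega,
    show 2 * (t + 1) - 2 * (j + 1) + 1 = 2 * (t - j) + 1 by omega,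
    show j + (t - j) + 1 = t + 1 by omega]
  ring

theorem ofReal_norm_sq_sum_mul_norm_pow (L : ℕ) (c : ℕ → ℂ) (z : ℂ) :
    ((‖∑ k ∈ range L, c k * z * (‖z‖ : ℂ) ^ (2 * k)‖ ^ 2 : ℝ) : ℂ)
      = ∑ j ∈ range L, ∑ m ∈ range L,
          c j * conj (c m) * ((‖z‖ ^ (2 * (j + m + 1)) : ℝ) : ℂ) := by
  rw [Complex.ofReal_pow, ← Complex.mul_conj', map_sum, sum_mul_sum]
  refine sum_congr rfl fun j _ => sum_congr rfl fun m _ => ?_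
  have hz : z * conj z = (‖z‖ : ℂ) ^ 2 := Complex.mul_conj' z
  simp only [map_mul, map_pow, Complex.conj_ofReal, Complex.ofReal_pow]
  calc c j * z * (‖z‖ : ℂ) ^ (2 * j) * (conj (c m) * conj z * (‖z‖ : ℂ) ^ (2 * m))
      = c j * conj (c m) * ((z * conj z) * (‖z‖ : ℂ) ^ (2 * j + 2 * m)) := by ring
    _ = _ := by rw [hz]; ring

theorem integral_norm_sq_sum_mul_norm_pow {Ω : Type*} [MeasurableSpace Ω] {μ : Measure Ω}
    {x : Ω → ℂ} (hint : ∀ n, Integrable (fun ω => ‖x ω‖ ^ (2 * (n + 1))) μ)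
    (L : ℕ) (c : ℕ → ℂ) :
    ((∫ ω, ‖∑ k ∈ range L, c k * x ω * (‖x ω‖ : ℂ) ^ (2 * k)‖ ^ 2 ∂μ : ℝ) : ℂ)
      = ∑ j ∈ range L, ∑ m ∈ range L,
          c j * conj (c m) * ((∫ ω, ‖x ω‖ ^ (2 * (j + m + 1)) ∂μ : ℝ) : ℂ) := by
  have hterm : ∀ j m, Integrable
      (fun ω => c j * conj (c m) * ((‖x ω‖ ^ (2 * (j + m + 1)) : ℝ) : ℂ)) μ := fun j m =>
    (hint (j + m)).ofReal.const_mul _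
  rw [← integral_complex_ofReal]
  simp_rw [ofReal_norm_sq_sum_mul_norm_pow]
  rw [integral_finsetSum _ fun j _ => integrable_finsetSum _ fun m _ => hterm j m]
  refine sum_congr rfl fun j _ => ?_
  rw [integral_finsetSum _ fun m _ => hterm j m]
  simp_rw [integral_const_mul, integral_complex_ofReal]

theorem bussgang_distortion_power_general {Ω : Type*} [MeasurableSpace Ω] (μ : Measure Ω)
    (P : ℝ) (hP : 0 < P) (x : Ω → ℂ)
    (hmom : ∀ m : ℕ, ∫ ω, ‖x ω‖ ^ (2 * m) ∂μ = m.factorial * P ^ m)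
    (L : ℕ) (a : ℕ → ℂ) (ha : ∀ j, L ≤ j → a (2 * j + 1) = 0)
    (y : Ω → ℂ)
    (hy : ∀ ω, y ω = ∑ k ∈ range L, a (2 * k + 1) * x ω * (‖x ω‖ : ℂ) ^ (2 * k))
    (g : ℂ)
    (Cη : ℂ)
    (hC : Cη = ((∫ ω, ‖y ω‖ ^ 2 ∂μ : ℝ) : ℂ) - (‖g‖ : ℂ) ^ 2 * P) :
    (((∫ ω, ‖y ω‖ ^ 2 ∂μ : ℝ) : ℂ)
      = ∑ k ∈ Finset.Icc 1 (2 * L - 1), (k.factorial : ℂ) * (P : ℂ) ^ k *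
          ∑ i ∈ Finset.Icc 1 k, a (2 * i - 1) * starRingEnd ℂ (a (2 * k - 2 * i + 1))) ∧
    (Cη = (∑ k ∈ Finset.Icc 1 (2 * L - 1), (k.factorial : ℂ) * (P : ℂ) ^ k *
          ∑ i ∈ Finset.Icc 1 k, a (2 * i - 1) * starRingEnd ℂ (a (2 * k - 2 * i + 1)))
        - (‖g‖ : ℂ) ^ 2 * P) := by
  have hint : ∀ n, Integrable (fun ω => ‖x ω‖ ^ (2 * (n + 1))) μ := fun n =>
    Integrable.of_integral_ne_zero (by rw [hmom]; positivity)
  have hpower : ((∫ ω, ‖y ω‖ ^ 2 ∂μ : ℝ) : ℂ)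
      = ∑ k ∈ Finset.Icc 1 (2 * L - 1), (k.factorial : ℂ) * (P : ℂ) ^ k *
          ∑ i ∈ Finset.Icc 1 k, a (2 * i - 1) * starRingEnd ℂ (a (2 * k - 2 * i + 1)) := by
    simp_rw [hy, integral_norm_sq_sum_mul_norm_pow hint, hmom]
    rw [sum_Icc_mul_sum_Icc_odd_eq_sum_range_sum_range L a (fun n => conj (a n)) _ ha
      fun j hj => by simp [ha j hj]]
    push_cast
    rfl
  exact ⟨hpower, by rw [hC, hpower]⟩

/-- Output power and distortion power of the memory-less polynomial model with a
Gaussian-moment input: `E[|y|²] = ∑_{k=1}^{2L-1} k! P^k ∑_{i=1}^{k} a_{2i-1} conj(a_{2k-2i+1})`,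
and consequently `C_η = E[|y|²] − |g|² P` equals that sum minus `|g|² P`. -/
theorem bussgang_distortion_power {Ω : Type*} [MeasurableSpace Ω] (μ : Measure Ω)
    [IsProbabilityMeasure μ]
    (P : ℝ) (hP : 0 < P) (x : Ω → ℂ)
    (hmom : ∀ m : ℕ, ∫ ω, ‖x ω‖ ^ (2 * m) ∂μ = m.factorial * P ^ m)
    (L : ℕ) (a : ℕ → ℂ) (ha : ∀ j, L ≤ j → a (2 * j + 1) = 0)
    (y : Ω → ℂ)
    (hy : ∀ ω, y ω = ∑ k ∈ range L, a (2 * k + 1) * x ω * (‖x ω‖ : ℂ) ^ (2 * k))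
    (g : ℂ) (hg : g = ∑ k ∈ range L, a (2 * k + 1) * (k + 1).factorial * (P : ℂ) ^ k)
    (Cη : ℂ)
    (hC : Cη = ((∫ ω, ‖y ω‖ ^ 2 ∂μ : ℝ) : ℂ) - (‖g‖ : ℂ) ^ 2 * P) :
    (((∫ ω, ‖y ω‖ ^ 2 ∂μ : ℝ) : ℂ)
      = ∑ k ∈ Finset.Icc 1 (2 * L - 1), (k.factorial : ℂ) * (P : ℂ) ^ k *
          ∑ i ∈ Finset.Icc 1 k, a (2 * i - 1) * starRingEnd ℂ (a (2 * k - 2 * i + 1))) ∧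
    (Cη = (∑ k ∈ Finset.Icc 1 (2 * L - 1), (k.factorial : ℂ) * (P : ℂ) ^ k *
          ∑ i ∈ Finset.Icc 1 k, a (2 * i - 1) * starRingEnd ℂ (a (2 * k - 2 * i + 1)))
        - (‖g‖ : ℂ) ^ 2 * P) :=
  bussgang_distortion_power_general μ P hP x hmom L a ha y hy g Cη hC
end

section
/- Let d > 0 and define f : [0,∞) → ℝ by f(R) = (1 + d/√(d²+R²))·(1/d² + 1/(d²+R²)). Then f is strictly decreasing on [0,∞), f(0) = 4/d², and f(R) tends to 1/d² as R → ∞. -/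
/-!
In terms of the squared distance `t = d² + R²` from the user to the rim of the disk, the distortion
power is `(1 + d/√t)(1/d² + 1/t)`, a product of two positive factors that both decrease strictly in
`t`, tend to `1` and `1/d²` as `t → ∞`, and equal `2` and `2/d²` at `t = d²`, i.e. at `R = 0`.
-/

open Real Set Filter Topology

lemma StrictAntiOn.mul_of_nonneg {α β : Type*} [Preorder α] [Semiring β] [PartialOrder β]
    [IsStrictOrderedRing β] {f g : α → β} {s : Set α} (hf : StrictAntiOn f s)
    (hg : StrictAntiOn g s) (hf₀ : ∀ x ∈ s, 0 ≤ f x) (hg₀ : ∀ x ∈ s, 0 ≤ g x) :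
    StrictAntiOn (fun x => f x * g x) s :=
  fun _ ha _ hb hab => mul_lt_mul'' (hf ha hb hab) (hg ha hb hab) (hf₀ _ hb) (hg₀ _ hb)

noncomputable def distortionProfile (d t : ℝ) : ℝ := (1 + d / √t) * (1 / d ^ 2 + 1 / t)

lemma distortionProfile_strictAntiOn {d : ℝ} (hd : 0 < d) :
    StrictAntiOn (distortionProfile d) (Ioi 0) := by
  have hsqrt : StrictAntiOn (fun t => 1 + d / √t) (Ioi 0) := fun a (ha : 0 < a) b _ hab => by
    dsimp only
    gcongr
  have hinv : StrictAntiOn (fun t => 1 / d ^ 2 + 1 / t) (Ioi 0) := fun a (ha : 0 < a) b _ hab => by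
    dsimp only
    gcongr
  exact hsqrt.mul_of_nonneg hinv (fun t _ => by positivity) fun t (ht : 0 < t) => by positivity

lemma distortionProfile_sq {d : ℝ} (hd : 0 < d) : distortionProfile d (d ^ 2) = 4 / d ^ 2 := by
  rw [distortionProfile, sqrt_sq hd.le, div_self hd.ne']
  ring

lemma tendsto_distortionProfile_atTop (d : ℝ) :
    Tendsto (distortionProfile d) atTop (𝓝 (1 / d ^ 2)) := by
  rw [show 1 / d ^ 2 = (1 + 0) * (1 / d ^ 2 + 0) by ring]
  exact (tendsto_const_nhds.add (tendsto_const_nhds.div_atTop tendsto_sqrt_atTop)).mul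
    (tendsto_const_nhds.add (tendsto_const_nhds.div_atTop tendsto_id))

/-- The normalized post-MRC distortion power
`f(R) = (1 + d/√(d²+R²))(1/d² + 1/(d²+R²))` is strictly decreasing on `[0,∞)`,
with maximum `f(0) = 4/d²` and limit `1/d²` as `R → ∞`. -/
theorem distortion_power_decreasing (d : ℝ) (hd : 0 < d) (f : ℝ → ℝ)
    (hf : ∀ R, f R = (1 + d / Real.sqrt (d ^ 2 + R ^ 2)) * (1 / d ^ 2 + 1 / (d ^ 2 + R ^ 2))) :
    StrictAntiOn f (Set.Ici 0) ∧ f 0 = 4 / d ^ 2 ∧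
      Filter.Tendsto f Filter.atTop (nhds (1 / d ^ 2)) := by
  have hf' : f = distortionProfile d ∘ fun R => d ^ 2 + R ^ 2 := funext hf
  have hmono : StrictMonoOn (fun R : ℝ => d ^ 2 + R ^ 2) (Ici 0) := fun a ha b hb hab =>
    add_lt_add_right (pow_left_strictMonoOn₀ two_ne_zero ha hb hab) _
  have hpos : MapsTo (fun R : ℝ => d ^ 2 + R ^ 2) (Ici 0) (Ioi 0) := fun R _ =>
    mem_Ioi.mpr (by positivity)
  subst hf'
  exact ⟨(distortionProfile_strictAntiOn hd).comp_strictMonoOn hmono hpos,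
    by simpa using distortionProfile_sq hd,
    (tendsto_distortionProfile_atTop d).comp <|
      tendsto_atTop_add_const_left _ _ (tendsto_pow_atTop two_ne_zero)⟩
end

section
/- Let G > 0, P > 0, κ ≥ 0, A > 0, σ² > 0 and d > 0 be real, and define γ(R) = ( (G·P/2)·(1 − d/√(d²+R²)) ) / ( (κPA/16π)·(1 + d/√(d²+R²))·(1/d² + 1/(d²+R²)) + σ² ) for R ≥ 0. Then γ(R) tends to (G·P/2) / ( κPA/(16π d²) + σ² ) as R → ∞. -/
/-!
Both `d / √(d² + R²)` and `1 / (d² + R²)` tend to `0` as `R → ∞`. Hence the signal factor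
`1 - d / √(d² + R²)` tends to `1`, while the distortion `β(R)` tends to `κPA / (16πd²)`, which is
nonnegative, so the denominator stays away from `0` (thanks to `σ² > 0`) and the SNDR converges to
the quotient of the limits.
-/

open Filter Topology

lemma tendsto_sq_add_sq_atTop (d : ℝ) : Tendsto (fun R : ℝ => d ^ 2 + R ^ 2) atTop atTop :=
  tendsto_atTop_add_const_left _ _ (tendsto_pow_atTop two_ne_zero)

lemma tendsto_div_sqrt_sq_add_sq_atTop (c d : ℝ) :
    Tendsto (fun R : ℝ => c / √(d ^ 2 + R ^ 2)) atTop (𝓝 0) :=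
  tendsto_const_nhds.div_atTop (Real.tendsto_sqrt_atTop.comp (tendsto_sq_add_sq_atTop d))

lemma tendsto_one_div_sq_add_sq_atTop (d : ℝ) :
    Tendsto (fun R : ℝ => 1 / (d ^ 2 + R ^ 2)) atTop (𝓝 0) :=
  tendsto_const_nhds.div_atTop (tendsto_sq_add_sq_atTop d)

lemma tendsto_distortion_atTop (c d : ℝ) :
    Tendsto (fun R : ℝ => c * (1 + d / √(d ^ 2 + R ^ 2)) * (1 / d ^ 2 + 1 / (d ^ 2 + R ^ 2)))
      atTop (𝓝 (c / d ^ 2)) := by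
  have h := ((tendsto_const_nhds (x := c)).mul
      ((tendsto_const_nhds (x := 1)).add (tendsto_div_sqrt_sq_add_sq_atTop d d))).mul
      ((tendsto_const_nhds (x := 1 / d ^ 2)).add (tendsto_one_div_sq_add_sq_atTop d))
  convert h using 2
  ring

theorem sndr_asymptotic_limit_general (G P κ A σ2 d : ℝ) (hP : 0 < P) (hκ : 0 ≤ κ)
    (hA : 0 < A) (hσ2 : 0 < σ2) (γ : ℝ → ℝ)
    (hγ : ∀ R, γ R = G * P / 2 * (1 - d / Real.sqrt (d ^ 2 + R ^ 2)) /
        (κ * P * A / (16 * Real.pi) * (1 + d / Real.sqrt (d ^ 2 + R ^ 2)) *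
            (1 / d ^ 2 + 1 / (d ^ 2 + R ^ 2)) + σ2)) :
    Filter.Tendsto γ Filter.atTop
      (nhds (G * P / 2 / (κ * P * A / (16 * Real.pi * d ^ 2) + σ2))) := by
  have hsignal : Tendsto (fun R : ℝ => G * P / 2 * (1 - d / √(d ^ 2 + R ^ 2))) atTop
      (𝓝 (G * P / 2)) := by
    simpa using tendsto_const_nhds.mul
      (tendsto_const_nhds (x := (1 : ℝ)).sub (tendsto_div_sqrt_sq_add_sq_atTop d d))
  have hdistortion := tendsto_distortion_atTop (κ * P * A / (16 * Real.pi)) d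
  rw [div_div] at hdistortion
  have hlimit_pos : 0 < κ * P * A / (16 * Real.pi * d ^ 2) + σ2 := by positivity
  rw [show γ = _ from funext hγ]
  exact hsignal.div (hdistortion.add_const σ2) hlimit_pos.ne'

/-- Asymptotic post-MRC SNDR of a disk-shaped LIS with per-antenna AGC (eqs. (26)–(28)):
as the radius `R → ∞`, `γ(R) → (GP/2)/(κPA/(16πd²) + σ²)`. -/
theorem sndr_asymptotic_limit (G P κ A σ2 d : ℝ) (hG : 0 < G) (hP : 0 < P) (hκ : 0 ≤ κ)
    (hA : 0 < A) (hσ2 : 0 < σ2) (hd : 0 < d) (γ : ℝ → ℝ)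
    (hγ : ∀ R, γ R = G * P / 2 * (1 - d / Real.sqrt (d ^ 2 + R ^ 2)) /
        (κ * P * A / (16 * Real.pi) * (1 + d / Real.sqrt (d ^ 2 + R ^ 2)) *
            (1 / d ^ 2 + 1 / (d ^ 2 + R ^ 2)) + σ2)) :
    Filter.Tendsto γ Filter.atTop
      (nhds (G * P / 2 / (κ * P * A / (16 * Real.pi * d ^ 2) + σ2))) :=
  sndr_asymptotic_limit_general G P κ A σ2 d hP hκ hA hσ2 γ hγ
end

section
/- Let P > 0, σ² > 0, κ ≥ 0, A > 0, d > 0, G > 0, and R₀ ≥ 0 be real. Define Υ = d/√(d²+R₀²), γ₀ = (P/(2σ²))·(1 − Υ), β_max = κPA/(4πd²), δ_max = (β_max + σ²)/(G·σ²), and γ(R) = ( (G·P/2)·(1 − d/√(d²+R²)) ) / ( (κPA/16π)·(1 + d/√(d²+R²))·(1/d² + 1/(d²+R²)) + σ² ). Assume δ_max·(1−Υ) < 1 and set R_ub² = d²·( 1/(1 + δ_maxΥ − δ_max)² − 1 ). Then for every R ≥ 0 with R² ≥ R_ub², one has γ(R) ≥ γ₀. -/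
/-!
Write `u = d / √(d² + R²)`. The distortion power never exceeds its boresight value `βmax`, so
`γ(R) ≥ (G P / 2) (1 - u) / (βmax + σ²)`. Since `δmax G σ² = βmax + σ²`, this lower bound equals `γ₀`
exactly when `1 - u = δmax (1 - Υ)`, and the condition `R² ≥ R_ub²` gives
`u ≤ 1 - δmax (1 - Υ)`.
-/

open Real

lemma div_sqrt_sq_add_sq_le_one (d x : ℝ) : d / √(d ^ 2 + x ^ 2) ≤ 1 :=
  div_le_one_of_le₀ ((le_abs_self d).trans (abs_le_sqrt (by nlinarith))) (sqrt_nonneg _)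

lemma div_sqrt_sq_add_sq_le_of_le {c d R : ℝ} (hc : 0 < c) (h : d ^ 2 * (1 / c ^ 2 - 1) ≤ R ^ 2) :
    d / √(d ^ 2 + R ^ 2) ≤ c := by
  have hsq : d ^ 2 ≤ c ^ 2 * (d ^ 2 + R ^ 2) := by
    have : d ^ 2 / c ^ 2 ≤ d ^ 2 + R ^ 2 := by
      have e : d ^ 2 * (1 / c ^ 2 - 1) = d ^ 2 / c ^ 2 - d ^ 2 := by ring
      linarith
    rwa [div_le_iff₀ (by positivity), mul_comm] at this
  refine div_le_of_le_mul₀ (sqrt_nonneg _) hc.le ?_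
  calc d ≤ |d| := le_abs_self d
    _ ≤ √(c ^ 2 * (d ^ 2 + R ^ 2)) := abs_le_sqrt hsq
    _ = c * √(d ^ 2 + R ^ 2) := by rw [sqrt_mul (sq_nonneg c), sqrt_sq hc.le]

lemma one_add_div_sqrt_mul_inv_add_inv_le {d : ℝ} (hd : d ≠ 0) (R : ℝ) :
    (1 + d / √(d ^ 2 + R ^ 2)) * (1 / d ^ 2 + 1 / (d ^ 2 + R ^ 2)) ≤ 4 / d ^ 2 := by
  have hu := div_sqrt_sq_add_sq_le_one d R
  have hinv : 1 / (d ^ 2 + R ^ 2) ≤ 1 / d ^ 2 :=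
    one_div_le_one_div_of_le (by positivity) (by nlinarith)
  rw [show 4 / d ^ 2 = 2 * (1 / d ^ 2 + 1 / d ^ 2) by ring]
  exact mul_le_mul (by linarith) (by linarith) (by positivity) zero_le_two

lemma distortion_le_boresight {K d : ℝ} (hK : 0 ≤ K) (hd : 0 < d) (R : ℝ) :
    K / (16 * π) * (1 + d / √(d ^ 2 + R ^ 2)) * (1 / d ^ 2 + 1 / (d ^ 2 + R ^ 2)) ≤
      K / (4 * π * d ^ 2) :=
  calc K / (16 * π) * (1 + d / √(d ^ 2 + R ^ 2)) * (1 / d ^ 2 + 1 / (d ^ 2 + R ^ 2))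
      = K / (16 * π) * ((1 + d / √(d ^ 2 + R ^ 2)) * (1 / d ^ 2 + 1 / (d ^ 2 + R ^ 2))) := by
        ring
    _ ≤ K / (16 * π) * (4 / d ^ 2) :=
        mul_le_mul_of_nonneg_left (one_add_div_sqrt_mul_inv_add_inv_le hd.ne' R) (by positivity)
    _ = K / (4 * π * d ^ 2) := by field_simp; ring

theorem scaling_upper_bound_general (P σ2 κ A d G : ℝ) (hP : 0 < P) (hσ2 : 0 < σ2) (hκ : 0 ≤ κ)
    (hA : 0 < A) (hd : 0 < d) (hG : 0 < G)
    (Υ : ℝ)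
    (γ₀ : ℝ) (hγ₀ : γ₀ = P / (2 * σ2) * (1 - Υ))
    (βmax : ℝ) (hβmax : βmax = κ * P * A / (4 * Real.pi * d ^ 2))
    (δmax : ℝ) (hδmax : δmax = (βmax + σ2) / (G * σ2))
    (γ : ℝ → ℝ)
    (hγ : ∀ R, γ R = G * P / 2 * (1 - d / Real.sqrt (d ^ 2 + R ^ 2)) /
        (κ * P * A / (16 * Real.pi) * (1 + d / Real.sqrt (d ^ 2 + R ^ 2)) *
            (1 / d ^ 2 + 1 / (d ^ 2 + R ^ 2)) + σ2))
    (hfeas : δmax * (1 - Υ) < 1)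
    (Rub2 : ℝ) (hRub2 : Rub2 = d ^ 2 * (1 / (1 + δmax * Υ - δmax) ^ 2 - 1)) :
    ∀ R : ℝ, 0 ≤ R → Rub2 ≤ R ^ 2 → γ₀ ≤ γ R := by
  intro R _ hRub
  have hKA : 0 ≤ κ * P * A := by positivity
  have hβmax : 0 ≤ βmax := hβmax ▸ by positivity
  have hu : d / √(d ^ 2 + R ^ 2) ≤ 1 + δmax * Υ - δmax :=
    div_sqrt_sq_add_sq_le_of_le (by linarith) (hRub2 ▸ hRub)
  have hγ₀ : γ₀ = G * P / 2 * (δmax * (1 - Υ)) / (βmax + σ2) := by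
    rw [hγ₀, hδmax]; field_simp
  rw [hγ R, hγ₀]
  calc G * P / 2 * (δmax * (1 - Υ)) / (βmax + σ2)
      ≤ G * P / 2 * (1 - d / √(d ^ 2 + R ^ 2)) / (βmax + σ2) := by gcongr; linarith
    _ ≤ _ := by
        have hnum : 0 ≤ 1 - d / √(d ^ 2 + R ^ 2) := by
          linarith [div_sqrt_sq_add_sq_le_one d R]
        refine div_le_div_of_nonneg_left (by positivity) (by positivity) ?_
        linarith [distortion_le_boresight hKA hd R]

/-- Upper bound on the minimum scaling required with non-ideal hardware (eq. (36)):
any radius `R` with `R² ≥ R_ub²` guarantees that the non-ideal LIS SNDR `γ(R)` matches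
the ideal-hardware reference SNR `γ₀` of a radius-`R₀` LIS. -/
theorem scaling_upper_bound (P σ2 κ A d G R₀ : ℝ) (hP : 0 < P) (hσ2 : 0 < σ2) (hκ : 0 ≤ κ)
    (hA : 0 < A) (hd : 0 < d) (hG : 0 < G) (hR₀ : 0 ≤ R₀)
    (Υ : ℝ) (hΥ : Υ = d / Real.sqrt (d ^ 2 + R₀ ^ 2))
    (γ₀ : ℝ) (hγ₀ : γ₀ = P / (2 * σ2) * (1 - Υ))
    (βmax : ℝ) (hβmax : βmax = κ * P * A / (4 * Real.pi * d ^ 2))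
    (δmax : ℝ) (hδmax : δmax = (βmax + σ2) / (G * σ2))
    (γ : ℝ → ℝ)
    (hγ : ∀ R, γ R = G * P / 2 * (1 - d / Real.sqrt (d ^ 2 + R ^ 2)) /
        (κ * P * A / (16 * Real.pi) * (1 + d / Real.sqrt (d ^ 2 + R ^ 2)) *
            (1 / d ^ 2 + 1 / (d ^ 2 + R ^ 2)) + σ2))
    (hfeas : δmax * (1 - Υ) < 1)
    (Rub2 : ℝ) (hRub2 : Rub2 = d ^ 2 * (1 / (1 + δmax * Υ - δmax) ^ 2 - 1)) :
    ∀ R : ℝ, 0 ≤ R → Rub2 ≤ R ^ 2 → γ₀ ≤ γ R :=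
  scaling_upper_bound_general P σ2 κ A d G hP hσ2 hκ hA hd hG Υ γ₀ hγ₀ βmax hβmax δmax hδmax γ hγ
    hfeas Rub2 hRub2
end

section
/- Let P > 0, σ² > 0, κ ≥ 0, A > 0, d > 0, G > 0, and R₀ ≥ 0 be real. Define Υ = d/√(d²+R₀²), γ₀ = (P/(2σ²))·(1 − Υ), β_min = κPA/(16πd²), δ_min = (β_min + σ²)/(G·σ²), and γ(R) = ( (G·P/2)·(1 − d/√(d²+R²)) ) / ( (κPA/16π)·(1 + d/√(d²+R²))·(1/d² + 1/(d²+R²)) + σ² ). Assume δ_min·(1−Υ) < 1 and set R_lb² = d²·( 1/(1 + δ_minΥ − δ_min)² − 1 ). Then for every R ≥ 0, γ(R) ≥ γ₀ implies R² ≥ R_lb². -/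
/-!
The distortion power never drops below its large-array limit, `β(R) ≥ β_min`, so
`γ(R) ≤ (G P / 2) (1 - d / √(d² + R²)) / (β_min + σ²)`. Comparing with `γ₀` gives
`d / √(d² + R²) ≤ 1 + δ_min Υ - δ_min`, whose right side is positive by feasibility;
squaring gives `R² ≥ R_lb²`.
-/

open Real

lemma distortion_power_ge_min {K d : ℝ} (hK : 0 ≤ K) (hd : 0 ≤ d) (R : ℝ) :
    K / (16 * π * d ^ 2) ≤
      K / (16 * π) * (1 + d / √(d ^ 2 + R ^ 2)) * (1 / d ^ 2 + 1 / (d ^ 2 + R ^ 2)) :=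
  calc K / (16 * π * d ^ 2) = K / (16 * π) * 1 * (1 / d ^ 2 + 0) := by
        rw [div_mul_eq_div_div, mul_one, add_zero, div_eq_mul_one_div (K / _)]
    _ ≤ _ := by
        have : 0 ≤ K / (16 * π) := by positivity
        gcongr
        · exact le_add_of_nonneg_right (by positivity)
        · positivity

lemma le_one_sub_of_snr_le {P σ2 G Υ u D N : ℝ} (hP : 0 < P) (hσ2 : 0 < σ2) (hG : 0 < G)
    (hΥ : Υ ≤ 1) (hD : 0 < D) (hDN : D ≤ N)
    (h : P / (2 * σ2) * (1 - Υ) ≤ G * P / 2 * (1 - u) / N) :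
    D / (G * σ2) * (1 - Υ) ≤ 1 - u := by
  have hN : 0 < N := hD.trans_le hDN
  have hfloor : D * (1 - Υ) ≤ N * (1 - Υ) := mul_le_mul_of_nonneg_right hDN (by linarith)
  rw [le_div_iff₀ hN] at h
  rw [div_mul_eq_mul_div, div_le_iff₀ (by positivity)]
  field_simp at h
  linarith

lemma sq_mul_inv_sq_sub_one_le {c d R : ℝ} (hc : 0 < c) (hd : 0 < d)
    (h : d / √(d ^ 2 + R ^ 2) ≤ c) : d ^ 2 * (1 / c ^ 2 - 1) ≤ R ^ 2 := by
  have hs : 0 < √(d ^ 2 + R ^ 2) := Real.sqrt_pos.mpr (by positivity)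
  have hdc : d ≤ c * √(d ^ 2 + R ^ 2) := (div_le_iff₀ hs).mp h
  have hsq : d ^ 2 ≤ c ^ 2 * (d ^ 2 + R ^ 2) := by
    calc d ^ 2 ≤ (c * √(d ^ 2 + R ^ 2)) ^ 2 := pow_le_pow_left₀ hd.le hdc 2
      _ = c ^ 2 * (d ^ 2 + R ^ 2) := by rw [mul_pow, Real.sq_sqrt (by positivity)]
  have hdiv : d ^ 2 / c ^ 2 ≤ d ^ 2 + R ^ 2 := by rwa [div_le_iff₀ (by positivity), mul_comm]
  rw [mul_sub, mul_one, mul_one_div]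
  linarith

theorem scaling_lower_bound_general (P σ2 κ A d G R₀ : ℝ) (hP : 0 < P) (hσ2 : 0 < σ2) (hκ : 0 ≤ κ)
    (hA : 0 < A) (hd : 0 < d) (hG : 0 < G)
    (Υ : ℝ) (hΥ : Υ = d / Real.sqrt (d ^ 2 + R₀ ^ 2))
    (γ₀ : ℝ) (hγ₀ : γ₀ = P / (2 * σ2) * (1 - Υ))
    (βmin : ℝ) (hβmin : βmin = κ * P * A / (16 * Real.pi * d ^ 2))
    (δmin : ℝ) (hδmin : δmin = (βmin + σ2) / (G * σ2))
    (γ : ℝ → ℝ)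
    (hγ : ∀ R, γ R = G * P / 2 * (1 - d / Real.sqrt (d ^ 2 + R ^ 2)) /
        (κ * P * A / (16 * Real.pi) * (1 + d / Real.sqrt (d ^ 2 + R ^ 2)) *
            (1 / d ^ 2 + 1 / (d ^ 2 + R ^ 2)) + σ2))
    (hfeas : δmin * (1 - Υ) < 1)
    (Rlb2 : ℝ) (hRlb2 : Rlb2 = d ^ 2 * (1 / (1 + δmin * Υ - δmin) ^ 2 - 1)) :
    ∀ R : ℝ, 0 ≤ R → γ₀ ≤ γ R → Rlb2 ≤ R ^ 2 := by
  intro R _ hγR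
  have hΥ1 : Υ ≤ 1 := hΥ ▸ div_sqrt_sq_add_sq_le_one d R₀
  have hβmin0 : 0 ≤ βmin := by rw [hβmin]; positivity
  have hβ := hβmin ▸ distortion_power_ge_min (K := κ * P * A) (by positivity) hd.le R
  have hcos := hδmin ▸ le_one_sub_of_snr_le hP hσ2 hG hΥ1 (by positivity)
    (add_le_add_left hβ σ2) (hγ₀ ▸ hγ R ▸ hγR)
  rw [hRlb2]
  exact sq_mul_inv_sq_sub_one_le (by linarith) hd (by linarith)

/-- Lower bound on the minimum scaling required with non-ideal hardware (eq. (38)):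
if the non-ideal LIS SNDR `γ(R)` matches the ideal-hardware reference SNR `γ₀` of a
radius-`R₀` LIS, then necessarily `R² ≥ R_lb²`. -/
theorem scaling_lower_bound (P σ2 κ A d G R₀ : ℝ) (hP : 0 < P) (hσ2 : 0 < σ2) (hκ : 0 ≤ κ)
    (hA : 0 < A) (hd : 0 < d) (hG : 0 < G) (hR₀ : 0 ≤ R₀)
    (Υ : ℝ) (hΥ : Υ = d / Real.sqrt (d ^ 2 + R₀ ^ 2))
    (γ₀ : ℝ) (hγ₀ : γ₀ = P / (2 * σ2) * (1 - Υ))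
    (βmin : ℝ) (hβmin : βmin = κ * P * A / (16 * Real.pi * d ^ 2))
    (δmin : ℝ) (hδmin : δmin = (βmin + σ2) / (G * σ2))
    (γ : ℝ → ℝ)
    (hγ : ∀ R, γ R = G * P / 2 * (1 - d / Real.sqrt (d ^ 2 + R ^ 2)) /
        (κ * P * A / (16 * Real.pi) * (1 + d / Real.sqrt (d ^ 2 + R ^ 2)) *
            (1 / d ^ 2 + 1 / (d ^ 2 + R ^ 2)) + σ2))
    (hfeas : δmin * (1 - Υ) < 1)
    (Rlb2 : ℝ) (hRlb2 : Rlb2 = d ^ 2 * (1 / (1 + δmin * Υ - δmin) ^ 2 - 1)) :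
    ∀ R : ℝ, 0 ≤ R → γ₀ ≤ γ R → Rlb2 ≤ R ^ 2 :=
  scaling_lower_bound_general P σ2 κ A d G R₀ hP hσ2 hκ hA hd hG Υ hΥ γ₀ hγ₀ βmin hβmin δmin hδmin γ
    hγ hfeas Rlb2 hRlb2
end

section
/- Let d > 0, R₀ > 0 and δ > 1 be real, and set Υ = d/√(d²+R₀²). Then there exists R ≥ 0 with 1 − d/√(d²+R²) ≥ δ·(1 − Υ) if and only if R₀² < d²·( δ²/(δ−1)² − 1 ). -/
/-!
The left-hand side `1 - d/√(d²+R²)` takes values in `[0, 1)` and comes arbitrarily close to `1`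
(for `R ≥ d/ε` it exceeds `1 - ε`), so the target `δ(1 - Υ)` is reachable exactly when it is
below `1`. With `s = √(d²+R₀²)` this means `s < δd/(δ-1)`, and squaring gives the bound on `R₀²`.
-/

open Real

lemma exists_le_one_sub_div_sqrt_iff {d : ℝ} (hd : 0 < d) (c : ℝ) :
    (∃ R : ℝ, 0 ≤ R ∧ c ≤ 1 - d / √(d ^ 2 + R ^ 2)) ↔ c < 1 := by
  constructor
  · rintro ⟨R, -, hc⟩
    have : 0 < d / √(d ^ 2 + R ^ 2) := div_pos hd (sqrt_pos.2 (by positivity))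
    linarith
  · intro hc
    have hε : 0 < 1 - c := sub_pos.2 hc
    have hR : 0 < d / (1 - c) := div_pos hd hε
    refine ⟨d / (1 - c), hR.le, ?_⟩
    have hle : d / (1 - c) ≤ √(d ^ 2 + (d / (1 - c)) ^ 2) :=
      le_sqrt_of_sq_le (le_add_of_nonneg_left (sq_nonneg d))
    have : d / √(d ^ 2 + (d / (1 - c)) ^ 2) ≤ 1 - c := by
      calc d / √(d ^ 2 + (d / (1 - c)) ^ 2) ≤ d / (d / (1 - c)) :=
            div_le_div_of_nonneg_left hd.le hR hle
        _ = 1 - c := by field_simp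
    linarith

lemma mul_one_sub_div_lt_one_iff {d s δ : ℝ} (hs : 0 < s) (hδ : 1 < δ) :
    δ * (1 - d / s) < 1 ↔ s < δ * d / (δ - 1) := by
  rw [lt_div_iff₀ (sub_pos.2 hδ), mul_one_sub, sub_lt_comm, mul_div_assoc', lt_div_iff₀ hs,
    mul_comm]

theorem scaling_feasibility_general (d R₀ δ : ℝ) (hd : 0 < d) (hδ : 1 < δ)
    (Υ : ℝ) (hΥ : Υ = d / Real.sqrt (d ^ 2 + R₀ ^ 2)) :
    (∃ R : ℝ, 0 ≤ R ∧ 1 - d / Real.sqrt (d ^ 2 + R ^ 2) ≥ δ * (1 - Υ)) ↔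
      R₀ ^ 2 < d ^ 2 * (δ ^ 2 / (δ - 1) ^ 2 - 1) := by
  have hs : 0 < √(d ^ 2 + R₀ ^ 2) := sqrt_pos.2 (by positivity)
  rw [exists_le_one_sub_div_sqrt_iff hd, hΥ, mul_one_sub_div_lt_one_iff hs hδ,
    sqrt_lt' (by have := sub_pos.2 hδ; positivity), mul_sub, mul_one, lt_sub_iff_add_lt',
    div_pow, mul_pow, mul_comm (δ ^ 2), mul_div_assoc]

/-- Feasibility of matching the ideal-hardware reference (eq. (41)): with
`Υ = d/√(d²+R₀²)` and imperfection factor `δ > 1`, some radius `R ≥ 0` satisfies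
`1 − d/√(d²+R²) ≥ δ(1−Υ)` iff `R₀² < d²(δ²/(δ−1)² − 1)`. -/
theorem scaling_feasibility (d R₀ δ : ℝ) (hd : 0 < d) (hR₀ : 0 < R₀) (hδ : 1 < δ)
    (Υ : ℝ) (hΥ : Υ = d / Real.sqrt (d ^ 2 + R₀ ^ 2)) :
    (∃ R : ℝ, 0 ≤ R ∧ 1 - d / Real.sqrt (d ^ 2 + R ^ 2) ≥ δ * (1 - Υ)) ↔
      R₀ ^ 2 < d ^ 2 * (δ ^ 2 / (δ - 1) ^ 2 - 1) :=
  scaling_feasibility_general d R₀ δ hd hδ Υ hΥ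
end

section
/- For all real d > 0, A > 0 and 0 ≤ r < R: [ A · ∫_{ρ=r}^{R} 2π·ρ · d²/(16π²·(d²+ρ²)³) dρ ] / [ ∫_{ρ=r}^{R} 2π·ρ · d/(4π·(d²+ρ²)^{3/2}) dρ ] = (d·A/(16π)) · ( 1/√(d²+r²) + 1/√(d²+R²) ) · ( 1/(d²+r²) + 1/(d²+R²) ). -/
/-!
Both moments are integrals of `ρ (d² + ρ²)^(-s)`, which has the elementary antiderivative
`(d² + ρ²)^(1-s) / (2(1-s))`. With `u = 1/√(d²+r²)` and `v = 1/√(d²+R²)` the fourth moment is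
proportional to `u⁴ - v⁴` and the second to `u - v`, so the ratio factors as `(u + v)(u² + v²)`.
-/

open Real intervalIntegral

theorem hasDerivAt_add_sq_rpow {c : ℝ} (hc : 0 < c) (p x : ℝ) :
    HasDerivAt (fun y => (c + y ^ 2) ^ p) (2 * x * p * (c + x ^ 2) ^ (p - 1)) x := by
  have hbase : HasDerivAt (fun y => c + y ^ 2) (2 * x) x := by
    simpa using (hasDerivAt_pow 2 x).const_add c
  exact hbase.rpow_const (Or.inl (by positivity))

theorem integral_mul_add_sq_rpow_neg {c : ℝ} (hc : 0 < c) {s : ℝ} (hs : s ≠ 1) (a b : ℝ) :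
    ∫ ρ in a..b, ρ * (c + ρ ^ 2) ^ (-s)
      = ((c + b ^ 2) ^ (1 - s) - (c + a ^ 2) ^ (1 - s)) / (2 * (1 - s)) := by
  have h1s : 1 - s ≠ 0 := sub_ne_zero.2 hs.symm
  rw [sub_div]
  refine integral_eq_sub_of_hasDerivAt (f := fun x => (c + x ^ 2) ^ (1 - s) / (2 * (1 - s)))
    (fun x _ => ?_) (Continuous.intervalIntegrable ?_ a b)
  · refine ((hasDerivAt_add_sq_rpow hc (1 - s) x).div_const (2 * (1 - s))).congr_deriv ?_
    rw [sub_sub_cancel_left]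
    field_simp
  · exact continuous_id.mul ((continuous_const.add (continuous_pow 2)).rpow_const
      fun y => Or.inl (add_pos_of_pos_of_nonneg hc (sq_nonneg y)).ne')

theorem integral_annulus_fourth_moment {d : ℝ} (hd : d ≠ 0) (r R : ℝ) :
    ∫ ρ in r..R, 2 * π * ρ * (d ^ 2 / (16 * π ^ 2 * (d ^ 2 + ρ ^ 2) ^ 3))
      = d ^ 2 / (32 * π) * (1 / (d ^ 2 + r ^ 2) ^ 2 - 1 / (d ^ 2 + R ^ 2) ^ 2) := by
  have hpos : ∀ ρ : ℝ, 0 < d ^ 2 + ρ ^ 2 := fun ρ => by positivity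
  have hintegrand : ∀ ρ : ℝ, 2 * π * ρ * (d ^ 2 / (16 * π ^ 2 * (d ^ 2 + ρ ^ 2) ^ 3))
      = d ^ 2 / (8 * π) * (ρ * (d ^ 2 + ρ ^ 2) ^ (-(3 : ℝ))) := fun ρ => by
    rw [rpow_neg (hpos ρ).le, rpow_ofNat]
    field_simp
    ring
  simp only [hintegrand, integral_const_mul]
  rw [integral_mul_add_sq_rpow_neg (by positivity) (by norm_num), show (1 - 3 : ℝ) = -2 by norm_num,
    rpow_neg (hpos r).le, rpow_neg (hpos R).le, rpow_ofNat, rpow_ofNat]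
  field_simp
  ring

theorem integral_annulus_second_moment {d : ℝ} (hd : d ≠ 0) (r R : ℝ) :
    ∫ ρ in r..R, 2 * π * ρ * (d / (4 * π * (d ^ 2 + ρ ^ 2) ^ ((3 : ℝ) / 2)))
      = d / 2 * (1 / √(d ^ 2 + r ^ 2) - 1 / √(d ^ 2 + R ^ 2)) := by
  have hpos : ∀ ρ : ℝ, 0 < d ^ 2 + ρ ^ 2 := fun ρ => by positivity
  have hintegrand : ∀ ρ : ℝ, 2 * π * ρ * (d / (4 * π * (d ^ 2 + ρ ^ 2) ^ ((3 : ℝ) / 2)))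
      = d / 2 * (ρ * (d ^ 2 + ρ ^ 2) ^ (-(3 / 2 : ℝ))) := fun ρ => by
    rw [rpow_neg (hpos ρ).le]
    field_simp
    ring
  simp only [hintegrand, integral_const_mul]
  rw [integral_mul_add_sq_rpow_neg (by positivity) (by norm_num),
    show (1 - 3 / 2 : ℝ) = -(1 / 2) by norm_num, rpow_neg (hpos r).le, rpow_neg (hpos R).le,
    ← sqrt_eq_rpow, ← sqrt_eq_rpow]
  field_simp
  ring

theorem one_div_eq_one_div_sqrt_sq {x : ℝ} (hx : 0 ≤ x) : 1 / x = (1 / √x) ^ 2 := by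
  rw [div_pow, sq_sqrt hx, one_pow]

theorem annulus_moment_ratio_general (d A r R : ℝ) (hd : 0 < d) (hr : 0 ≤ r)
    (hrR : r < R) :
    (A * ∫ ρ in r..R,
          2 * Real.pi * ρ * (d ^ 2 / (16 * Real.pi ^ 2 * (d ^ 2 + ρ ^ 2) ^ 3))) /
        (∫ ρ in r..R,
          2 * Real.pi * ρ * (d / (4 * Real.pi * (d ^ 2 + ρ ^ 2) ^ ((3 : ℝ) / 2))))
      = d * A / (16 * Real.pi) *
          (1 / Real.sqrt (d ^ 2 + r ^ 2) + 1 / Real.sqrt (d ^ 2 + R ^ 2)) *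
          (1 / (d ^ 2 + r ^ 2) + 1 / (d ^ 2 + R ^ 2)) := by
  have hr_pos : 0 < d ^ 2 + r ^ 2 := by positivity
  have hR_pos : 0 < d ^ 2 + R ^ 2 := by positivity
  have hlt : 1 / √(d ^ 2 + R ^ 2) < 1 / √(d ^ 2 + r ^ 2) :=
    one_div_lt_one_div_of_lt (sqrt_pos.2 hr_pos) (sqrt_lt_sqrt hr_pos.le (by nlinarith))
  rw [integral_annulus_fourth_moment hd.ne', integral_annulus_second_moment hd.ne',
    ← one_div_pow, ← one_div_pow, one_div_eq_one_div_sqrt_sq hr_pos.le,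
    one_div_eq_one_div_sqrt_sq hR_pos.le]
  generalize 1 / √(d ^ 2 + r ^ 2) = u at hlt ⊢
  generalize 1 / √(d ^ 2 + R ^ 2) = v at hlt ⊢
  have huv : u - v ≠ 0 := (sub_pos.2 hlt).ne'
  field_simp
  ring

/-- Closed form of the annulus distortion ratio (eq. (44)): the ratio of the
fourth-moment channel integral to the second-moment channel integral over an annulus
with inner radius `r` and outer radius `R` equals
`(dA/16π)(1/√(d²+r²) + 1/√(d²+R²))(1/(d²+r²) + 1/(d²+R²))`. -/
theorem annulus_moment_ratio (d A r R : ℝ) (hd : 0 < d) (hA : 0 < A) (hr : 0 ≤ r)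
    (hrR : r < R) :
    (A * ∫ ρ in r..R,
          2 * Real.pi * ρ * (d ^ 2 / (16 * Real.pi ^ 2 * (d ^ 2 + ρ ^ 2) ^ 3))) /
        (∫ ρ in r..R,
          2 * Real.pi * ρ * (d / (4 * Real.pi * (d ^ 2 + ρ ^ 2) ^ ((3 : ℝ) / 2))))
      = d * A / (16 * Real.pi) *
          (1 / Real.sqrt (d ^ 2 + r ^ 2) + 1 / Real.sqrt (d ^ 2 + R ^ 2)) *
          (1 / (d ^ 2 + r ^ 2) + 1 / (d ^ 2 + R ^ 2)) :=
  annulus_moment_ratio_general d A r R hd hr hrR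
end
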